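/- For every complex number x, ∑_{ν ∈ ℤ} (-1)^ν J_{5ν}(x) = (1/5)[1 + 2 cos(x sin(π/5)) + 2 cos(x sin(3π/5))]. -/

import Mathlib

open scoped Real

/-- Bessel function of the first kind of natural order `n`, via its power series. -/
noncomputable def besselJNat (n : ℕ) (x : ℂ) : ℂ :=
  ∑' m : ℕ, (-1 : ℂ) ^ m / ((m.factorial : ℂ) * ((m + n).factorial : ℂ)) * (x / 2) ^ (2 * m + n)

/-- Bessel function of the first kind of integer order, with `J_{-n} = (-1)^n J_n`. -/
noncomputable def besselJ (n : ℤ) (x : ℂ) : ℂ :=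
  if 0 ≤ n then besselJNat n.toNat x else (-1 : ℂ) ^ n.natAbs * besselJNat n.natAbs x

/-!
Multiplying the exponential series of `exp (x u / 2)` and `exp (-x / (2 u))` and grouping the
terms by the difference of the two exponents gives the generating function
`∑ₙ Jₙ(x) uⁿ = exp (x/2 (u - u⁻¹))`; at `u = e^{iθ}` this is the Jacobi–Anger expansion
`∑ₙ Jₙ(x) e^{inθ} = e^{ix sin θ}`. Averaging it over the `N`-th roots of `-1`,
`e^{i(2k+1)π/N} = e^{iπ/N} ζ^k` with `ζ` a primitive `N`-th root of unity, kills every `n` not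
divisible by `N` and leaves the weight `(-1)^ν` at `n = Nν`. For `N = 5` the five values
`sin ((2k+1)π/5)` are `±sin (π/5)`, `±sin (3π/5)` and `0`, which pair up into cosines.
-/

open Complex Finset

lemma hasSum_pow_div_factorial_mul_pow_div_factorial (v w : ℂ) :
    HasSum (fun p : ℕ × ℕ => v ^ p.1 / p.1.factorial * (w ^ p.2 / p.2.factorial))
      (exp v * exp w) := by
  have hexp (z : ℂ) : HasSum (fun m : ℕ => z ^ m / m.factorial) (exp z) := by
    rw [exp_eq_exp_ℂ]
    exact NormedSpace.expSeries_div_hasSum_exp z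
  have hs : Summable (fun p : ℕ × ℕ => v ^ p.1 / p.1.factorial * (w ^ p.2 / p.2.factorial)) := by
    refine Summable.of_norm (((Real.summable_pow_div_factorial ‖v‖).mul_of_nonneg
      (Real.summable_pow_div_factorial ‖w‖) (fun _ => by positivity) (fun _ => by positivity)).congr
      fun p => ?_)
    simp only [norm_mul, norm_div, norm_pow, Complex.norm_natCast]
  simpa only using (hexp v).mul (hexp w) hs

lemma hasSum_besselJNat_mul_pow (x : ℂ) {u : ℂ} (hu : u ≠ 0) (n : ℕ) :
    HasSum (fun k : ℕ => (x / 2 * u) ^ (k + n) / (k + n).factorial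
        * ((-(x / 2) / u) ^ k / k.factorial))
      (besselJNat n x * u ^ n) := by
  have hterm (k : ℕ) : (x / 2 * u) ^ (k + n) / (k + n).factorial
        * ((-(x / 2) / u) ^ k / k.factorial)
      = (-1 : ℂ) ^ k / (k.factorial * (k + n).factorial) * (x / 2) ^ (2 * k + n) * u ^ n := by
    rw [div_pow, neg_pow, mul_pow, pow_add u]
    field_simp
    ring
  have hinj : Function.Injective (fun k : ℕ => (k + n, k)) := fun a b h => by
    simpa using congrArg Prod.snd h
  have hs := (hasSum_pow_div_factorial_mul_pow_div_factorial (x / 2 * u) (-(x / 2) / u)).summable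
    |>.comp_injective hinj
  simp only [Function.comp_def, hterm] at hs ⊢
  exact ((summable_mul_right_iff (pow_ne_zero n hu)).1 hs).hasSum.mul_right _

def intProdNatEquiv : ℤ × ℕ ≃ ℕ × ℕ where
  toFun p := (p.2 + p.1.toNat, p.2 + (-p.1).toNat)
  invFun q := (q.1 - q.2, min q.1 q.2)
  left_inv p := by
    simp only [Prod.ext_iff]
    omega
  right_inv q := by
    simp only [Prod.ext_iff]
    omega

@[simp]
lemma intProdNatEquiv_natCast (m k : ℕ) : intProdNatEquiv (m, k) = (k + m, k) := by
  simp [intProdNatEquiv]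

@[simp]
lemma intProdNatEquiv_negSucc (m k : ℕ) :
    intProdNatEquiv (Int.negSucc m, k) = (k, k + (m + 1)) := by
  simp only [intProdNatEquiv, Equiv.coe_fn_mk, Prod.mk.injEq]
  omega

theorem hasSum_besselJ_mul_zpow (x : ℂ) {u : ℂ} (hu : u ≠ 0) :
    HasSum (fun n : ℤ => besselJ n x * u ^ n) (exp (x / 2 * (u - u⁻¹))) := by
  have h := hasSum_pow_div_factorial_mul_pow_div_factorial (x / 2 * u) (-(x / 2) / u)
  rw [← exp_add, ← intProdNatEquiv.hasSum_iff] at h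
  convert h.prod_fiberwise fun n => ?_ using 2
  · ring
  rcases n with m | m
  · simpa [besselJ] using hasSum_besselJNat_mul_pow x hu m
  · -- `u ↦ -u⁻¹` exchanges the two exponential series
    have h' := hasSum_besselJNat_mul_pow x (neg_ne_zero.2 (inv_ne_zero hu)) (m + 1)
    rw [show x / 2 * -u⁻¹ = -(x / 2) / u by ring, show -(x / 2) / -u⁻¹ = x / 2 * u by field_simp]
      at h'
    convert h' using 1
    · simp only [Function.comp_apply, intProdNatEquiv_negSucc, mul_comm]
    · rw [besselJ, if_neg (Int.negSucc_lt_zero m).not_ge, Int.natAbs_negSucc, Nat.succ_eq_add_one,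
        zpow_negSucc, neg_pow u⁻¹, inv_pow]
      ring

theorem hasSum_besselJ_mul_exp_mul_I_zpow (x θ : ℂ) :
    HasSum (fun n : ℤ => besselJ n x * exp (θ * I) ^ n) (exp (x * sin θ * I)) := by
  convert hasSum_besselJ_mul_zpow x (exp_ne_zero (θ * I)) using 2
  rw [← exp_neg, sin]
  ring_nf
  rw [I_sq]
  ring

section RootsOfUnity

variable {K : Type*} [Field K] {N : ℕ} {ζ : K}

lemma IsPrimitiveRoot.sum_mul_pow_zpow_eq_zero (hζ : IsPrimitiveRoot ζ N) (η : K) {n : ℤ}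
    (hn : ¬ (N : ℤ) ∣ n) : ∑ k ∈ range N, (η * ζ ^ k) ^ n = 0 := by
  have hζn : ζ ^ n ≠ 1 := by rwa [Ne, hζ.zpow_eq_one_iff_dvd]
  have hζnN : (ζ ^ n) ^ N = 1 := by
    rw [← zpow_natCast, ← zpow_mul, mul_comm, zpow_mul, zpow_natCast, hζ.pow_eq_one, one_zpow]
  have hterm (k : ℕ) : (η * ζ ^ k) ^ n = η ^ n * (ζ ^ n) ^ k := by
    rw [mul_zpow, ← zpow_natCast, ← zpow_natCast (ζ ^ n), ← zpow_mul, ← zpow_mul, mul_comm (k : ℤ)]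
  rw [sum_congr rfl fun k _ => hterm k, ← mul_sum, geom_sum_eq hζn, hζnN, sub_self, zero_div,
    mul_zero]

lemma IsPrimitiveRoot.sum_mul_pow_zpow_mul (hζ : IsPrimitiveRoot ζ N) (η : K) (ν : ℤ) :
    ∑ k ∈ range N, (η * ζ ^ k) ^ ((N : ℤ) * ν) = N * (η ^ N) ^ ν := by
  have hterm (k : ℕ) : (η * ζ ^ k) ^ ((N : ℤ) * ν) = (η ^ N) ^ ν := by
    rw [zpow_mul, zpow_natCast, mul_pow, ← pow_mul, mul_comm k, pow_mul, hζ.pow_eq_one, one_pow,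
      mul_one]
  simp [hterm]

end RootsOfUnity

lemma exp_odd_mul_pi_div_mul_I (N k : ℕ) :
    exp ((2 * k + 1) * π / N * I) = exp (π * I / N) * exp (2 * π * I / N) ^ k := by
  rw [← exp_nat_mul, ← exp_add]
  ring_nf

theorem hasSum_neg_one_zpow_mul_besselJ_mul {N : ℕ} (hN : N ≠ 0) (x : ℂ) :
    HasSum (fun ν : ℤ => (-1 : ℂ) ^ ν * besselJ (N * ν) x)
      ((∑ k ∈ range N, exp (x * Real.sin ((2 * k + 1) * π / N) * I)) / N) := by
  set η := exp (π * I / N)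
  set ζ := exp (2 * π * I / N)
  have hζ : IsPrimitiveRoot ζ N := isPrimitiveRoot_exp N hN
  have hηN : η ^ N = -1 := by
    rw [← exp_nat_mul, mul_div_cancel₀ _ (Nat.cast_ne_zero.2 hN), exp_pi_mul_I]
  have hJA : HasSum (fun n : ℤ => besselJ n x * ∑ k ∈ range N, (η * ζ ^ k) ^ n)
      (∑ k ∈ range N, exp (x * Real.sin ((2 * k + 1) * π / N) * I)) := by
    simp only [mul_sum]
    refine hasSum_sum fun k _ => ?_
    rw [← exp_odd_mul_pi_div_mul_I]
    push_cast
    exact hasSum_besselJ_mul_exp_mul_I_zpow x _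
  have hvan : ∀ n ∉ Set.range fun ν : ℤ => (N : ℤ) * ν,
      besselJ n x * ∑ k ∈ range N, (η * ζ ^ k) ^ n = 0 := fun n hn => by
    rw [hζ.sum_mul_pow_zpow_eq_zero η fun ⟨ν, hν⟩ => hn ⟨ν, hν.symm⟩, mul_zero]
  rw [← (mul_right_injective₀ (Int.natCast_ne_zero.2 hN)).hasSum_iff hvan] at hJA
  refine (hJA.div_const (N : ℂ)).congr_fun fun ν => ?_
  simp only [Function.comp_apply, hζ.sum_mul_pow_zpow_mul, hηN]
  field_simp

theorem stmt_19 (x : ℂ) :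
    ∑' ν : ℤ, (-1 : ℂ) ^ ν * besselJ (5 * ν) x
      = (1 / 5) * (1 + 2 * Complex.cos (x * (Real.sin (π / 5) : ℝ))
          + 2 * Complex.cos (x * (Real.sin (3 * π / 5) : ℝ))) := by
  have h := hasSum_neg_one_zpow_mul_besselJ_mul (N := 5) (by norm_num) x
  have h7 : sin (7 * π / 5) = -sin (3 * π / 5) := by
    rw [← sin_two_pi_sub]
    ring_nf
  have h9 : sin (9 * π / 5) = -sin (π / 5) := by
    rw [← sin_two_pi_sub]
    ring_nf
  simp only [sum_range_succ, sum_range_zero] at h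
  norm_num [h7, h9] at h
  rw [h.tsum_eq]
  push_cast
  rw [two_cos, two_cos]
  ring_nf
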